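/- In the shifted cube grid, every closed ball of radius r < 1/6 intersects at most four tiles: for every p ∈ ℝ³ and every r with 0 ≤ r < 1/6, the number of triples (i, j, k) ∈ ℤ³ such that T(i, j, k) intersects closedBall(p, r) is at most four. -/

import Mathlib

open Metric Set

/-!
Scale the first two coordinates by 3: the tile `T(i, j, k)` becomes
`[a, a + 3) × [b, b + 3) × [k, k + 1)` with `(a, b) = (3i + k, 3j + k - i)`. The projections of a
ball of radius `r < 1/6` have length `6r < 1` horizontally (after scaling) and `2r < 1`
vertically, so every tile it meets has `k ∈ {K - 1, K}`, `a ∈ [A - 3, A]` and `b ∈ [B - 3, B]`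
for integers `A, B, K` fixed by the ball. Translating by `(s, t, u) ∈ ℤ³` moves such a window by
`(3s + u, 3t + u - s, u)`, so up to symmetry there are only nine windows (`K = 0`,
`A, B ∈ {0, 1, 2}`), and each contains at most four tiles.
-/

/-- The tile `T(i, j, k) = [i + k/3, i + k/3 + 1) × [j + (k−i)/3, j + (k−i)/3 + 1) × [k, k+1)`
of the shifted cube grid: each horizontal layer is shifted by 1/3 of a cube's width in the
x- and y-directions relative to the layer below it, and within each layer each column is
shifted by 1/3 in the y-direction relative to the column to its left. -/
def shiftedCube (i j k : ℤ) : Set (EuclideanSpace ℝ (Fin 3)) :=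
  {x | x 0 ∈ Ico ((i : ℝ) + (k : ℝ) / 3) ((i : ℝ) + (k : ℝ) / 3 + 1) ∧
       x 1 ∈ Ico ((j : ℝ) + ((k : ℝ) - (i : ℝ)) / 3) ((j : ℝ) + ((k : ℝ) - (i : ℝ)) / 3 + 1) ∧
       x 2 ∈ Ico (k : ℝ) ((k : ℝ) + 1)}

lemma mem_Icc_floor_add_of_mem_Ico {n m : ℤ} {x y r : ℝ} (hx : x ∈ Ico (n : ℝ) (n + m))
    (hxy : |x - y| ≤ r) (hr : 2 * r < 1) : n ∈ Icc (⌊y + r⌋ - m) ⌊y + r⌋ := by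
  obtain ⟨hnx, hxm⟩ := hx
  obtain ⟨hxy₁, hxy₂⟩ := abs_sub_le_iff.mp hxy
  have hfloor : (⌊y + r⌋ : ℝ) < n + m + 1 := by linarith [Int.floor_le (y + r)]
  exact ⟨by linarith [show ⌊y + r⌋ < n + m + 1 by exact_mod_cast hfloor],
    Int.le_floor.mpr (by linarith)⟩

def tileWindow (A B K : ℤ) : Set (ℤ × ℤ × ℤ) :=
  {q | K - 1 ≤ q.2.2 ∧ q.2.2 ≤ K ∧ A - 3 ≤ 3 * q.1 + q.2.2 ∧ 3 * q.1 + q.2.2 ≤ A ∧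
    B - 3 ≤ 3 * q.2.1 + q.2.2 - q.1 ∧ 3 * q.2.1 + q.2.2 - q.1 ≤ B}

instance (A B K : ℤ) : DecidablePred (· ∈ tileWindow A B K) :=
  fun _ => inferInstanceAs (Decidable (_ ∧ _))

lemma mem_tileWindow_of_inter_closedBall_nonempty {p : EuclideanSpace ℝ (Fin 3)} {r : ℝ}
    (hr : r < 1 / 6) {i j k : ℤ} (h : (shiftedCube i j k ∩ closedBall p r).Nonempty) :
    (i, j, k) ∈ tileWindow ⌊3 * p 0 + 3 * r⌋ ⌊3 * p 1 + 3 * r⌋ ⌊p 2 + r⌋ := by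
  obtain ⟨x, ⟨⟨hx0, hx0'⟩, ⟨hx1, hx1'⟩, hx2⟩, hx⟩ := h
  have hdist (m : Fin 3) : |x m - p m| ≤ r :=
    (PiLp.dist_apply_le x p m).trans (mem_closedBall.mp hx)
  have hscaled (m : Fin 3) : |3 * x m - 3 * p m| ≤ 3 * r := by
    rw [← mul_sub, abs_mul, abs_of_pos three_pos]
    linarith [hdist m]
  have hk := mem_Icc_floor_add_of_mem_Ico (m := 1) (by exact_mod_cast hx2) (hdist 2) (by linarith)
  have ha := mem_Icc_floor_add_of_mem_Ico (n := 3 * i + k) (m := 3)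
    ⟨by push_cast; linarith, by push_cast; linarith⟩ (hscaled 0) (by linarith)
  have hb := mem_Icc_floor_add_of_mem_Ico (n := 3 * j + k - i) (m := 3)
    ⟨by push_cast; linarith, by push_cast; linarith⟩ (hscaled 1) (by linarith)
  exact ⟨hk.1, hk.2, ha.1, ha.2, hb.1, hb.2⟩

lemma tileWindow_add (A B K s t u : ℤ) :
    tileWindow (A + 3 * s + u) (B + 3 * t + u - s) (K + u) =
      (· + (s, t, u)) '' tileWindow A B K := by
  ext ⟨i, j, k⟩
  simp only [image_add_right, mem_preimage, tileWindow, mem_ofPred_eq, Prod.fst_add,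
    Prod.snd_add, Prod.fst_neg, Prod.snd_neg]
  omega

lemma encard_tileWindow_le_of_mem_Icc {A B : ℤ} (hA : A ∈ Icc 0 2) (hB : B ∈ Icc 0 2) :
    (tileWindow A B 0).encard ≤ 4 := by
  have hcount : ∀ A ∈ Finset.Icc (0 : ℤ) 2, ∀ B ∈ Finset.Icc (0 : ℤ) 2,
      ((Finset.Icc (-1 : ℤ) 1 ×ˢ Finset.Icc (-1 : ℤ) 1 ×ˢ Finset.Icc (-1 : ℤ) 0).filter
        (· ∈ tileWindow A B 0)).card ≤ 4 := by
    decide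
  have hbox : tileWindow A B 0 ⊆
      ((Finset.Icc (-1 : ℤ) 1 ×ˢ Finset.Icc (-1 : ℤ) 1 ×ˢ Finset.Icc (-1 : ℤ) 0).filter
        (· ∈ tileWindow A B 0) : Finset (ℤ × ℤ × ℤ)) := by
    rintro ⟨i, j, k⟩ h
    obtain ⟨hA0, hA2⟩ := hA
    obtain ⟨hB0, hB2⟩ := hB
    rw [Finset.coe_filter]
    refine ⟨?_, h⟩
    simp only [tileWindow, mem_ofPred_eq] at h
    simp only [Finset.mem_product, Finset.mem_Icc]
    omega
  calc (tileWindow A B 0).encard ≤ _ := encard_le_encard hbox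
    _ ≤ 4 := by
      rw [encard_coe_eq_coe_finsetCard]
      exact_mod_cast hcount A (Finset.mem_Icc.mpr hA) B (Finset.mem_Icc.mpr hB)

lemma encard_tileWindow_le (A B K : ℤ) : (tileWindow A B K).encard ≤ 4 := by
  set s := (A - K) / 3
  set t := (B - K + s) / 3
  have hwindow : tileWindow A B K =
      (· + (s, t, K)) '' tileWindow ((A - K) % 3) ((B - K + s) % 3) 0 := by
    rw [← tileWindow_add]
    congr 1 <;> omega
  rw [hwindow, (add_left_injective _).encard_image]
  exact encard_tileWindow_le_of_mem_Icc ⟨by omega, by omega⟩ ⟨by omega, by omega⟩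

theorem shifted_cube_grid_ball_meets_at_most_four_tiles_general
    (p : EuclideanSpace ℝ (Fin 3)) (r : ℝ) (hr : r < 1 / 6) :
    {q : ℤ × ℤ × ℤ | (shiftedCube q.1 q.2.1 q.2.2 ∩ closedBall p r).Nonempty}.encard ≤ 4 :=
  (encard_le_encard fun _ hq => mem_tileWindow_of_inter_closedBall_nonempty hr hq).trans
    (encard_tileWindow_le _ _ _)

/-- Every closed ball of radius `r < 1/6` intersects at most four tiles of the shifted
cube grid. -/
theorem shifted_cube_grid_ball_meets_at_most_four_tiles
    (p : EuclideanSpace ℝ (Fin 3)) (r : ℝ) (hr0 : 0 ≤ r) (hr : r < 1 / 6) :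
    {q : ℤ × ℤ × ℤ | (shiftedCube q.1 q.2.1 q.2.2 ∩ closedBall p r).Nonempty}.encard ≤ 4 :=
  shifted_cube_grid_ball_meets_at_most_four_tiles_general p r hr
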